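/- Let A and B be complex unital Banach algebras, fix c ∈ A and an invertible d ∈ B, and let φ: A → B be a bijective linear map such that φ(a)φ(b) = d whenever ab = c. Then φ maps invertible elements to invertible elements; moreover, for every invertible t ∈ A one has φ(t⁻¹ c) = φ(t)⁻¹ d and φ(c t⁻¹) = d φ(t)⁻¹. -/

import Mathlib

/-! Applying the hypothesis to the factorisations `c = t * (t⁻¹ * c) = (c * t⁻¹) * t` shows that
`φ t` has a right inverse `φ (t⁻¹ * c) * d⁻¹` and a left inverse `d⁻¹ * φ (c * t⁻¹)`, so it is
invertible; the two formulas are then these factorisations solved for the other factor. -/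

theorem isUnit_of_mul_isUnit_of_mul_isUnit {M : Type*} [Monoid M] {x y z : M}
    (hxy : IsUnit (x * y)) (hzx : IsUnit (z * x)) : IsUnit x :=
  isUnit_iff_exists_and_exists.mpr
    ⟨⟨y * ↑hxy.unit⁻¹, by rw [← mul_assoc, hxy.mul_val_inv]⟩,
      ⟨↑hzx.unit⁻¹ * z, by rw [mul_assoc, hzx.val_inv_mul]⟩⟩

def PreservesProductsAt {M N : Type*} [Mul M] [Mul N] (f : M → N) (c : M) (d : N) : Prop :=
  ∀ a b : M, a * b = c → f a * f b = d

namespace PreservesProductsAt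

variable {M N : Type*} [Monoid M] {f : M → N} {c : M}

section Monoid

variable [Monoid N] {d : N}

theorem apply_mul_apply_inv_mul (hf : PreservesProductsAt f c d) (t : Mˣ) :
    f t * f (↑t⁻¹ * c) = d :=
  hf _ _ (by rw [← mul_assoc, Units.mul_inv, one_mul])

theorem apply_mul_inv_mul_apply (hf : PreservesProductsAt f c d) (t : Mˣ) :
    f (c * ↑t⁻¹) * f t = d :=
  hf _ _ (by rw [mul_assoc, Units.inv_mul, mul_one])

theorem isUnit_apply_of_isUnit (hf : PreservesProductsAt f c d) (hd : IsUnit d) {t : M}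
    (ht : IsUnit t) : IsUnit (f t) := by
  obtain ⟨t, rfl⟩ := ht
  exact isUnit_of_mul_isUnit_of_mul_isUnit (hf.apply_mul_apply_inv_mul t ▸ hd)
    (hf.apply_mul_inv_mul_apply t ▸ hd)

end Monoid

variable [MonoidWithZero N] {d : N}

theorem apply_inv_mul (hf : PreservesProductsAt f c d) (hd : IsUnit d) (t : Mˣ) :
    f (↑t⁻¹ * c) = Ring.inverse (f t) * d := by
  rw [← hf.apply_mul_apply_inv_mul t, ← mul_assoc,
    Ring.inverse_mul_cancel _ (hf.isUnit_apply_of_isUnit hd t.isUnit), one_mul]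

theorem apply_mul_inv (hf : PreservesProductsAt f c d) (hd : IsUnit d) (t : Mˣ) :
    f (c * ↑t⁻¹) = d * Ring.inverse (f t) := by
  rw [← hf.apply_mul_inv_mul_apply t, mul_assoc,
    Ring.mul_inverse_cancel _ (hf.isUnit_apply_of_isUnit hd t.isUnit), mul_one]

end PreservesProductsAt

theorem stmt11_general {A B : Type*} [NormedRing A] [NormedAlgebra ℂ A]
    [NormedRing B] [NormedAlgebra ℂ B]
    (c : A) (d : B) (hd : IsUnit d)
    (φ : A →ₗ[ℂ] B)
    (h : ∀ a b : A, a * b = c → φ a * φ b = d) :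
    (∀ t : A, IsUnit t → IsUnit (φ t)) ∧
      ∀ t : Aˣ, φ (↑t⁻¹ * c) = Ring.inverse (φ ↑t) * d ∧
        φ (c * ↑t⁻¹) = d * Ring.inverse (φ ↑t) := by
  have hφ : PreservesProductsAt φ c d := h
  exact ⟨fun _ => hφ.isUnit_apply_of_isUnit hd,
    fun t => ⟨hφ.apply_inv_mul hd t, hφ.apply_mul_inv hd t⟩⟩

/-- Let `A`, `B` be complex unital Banach algebras, `c ∈ A`, `d ∈ B`
invertible, and `φ : A → B` a bijective linear map preserving products at `(c, d)`. Then
`φ` preserves invertibility, and for every invertible `t`, `φ (t⁻¹ c) = φ(t)⁻¹ d` and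
`φ (c t⁻¹) = d φ(t)⁻¹`. -/
theorem stmt11 {A B : Type*} [NormedRing A] [NormedAlgebra ℂ A] [CompleteSpace A]
    [NormedRing B] [NormedAlgebra ℂ B] [CompleteSpace B]
    (c : A) (d : B) (hd : IsUnit d)
    (φ : A →ₗ[ℂ] B) (hbij : Function.Bijective φ)
    (h : ∀ a b : A, a * b = c → φ a * φ b = d) :
    (∀ t : A, IsUnit t → IsUnit (φ t)) ∧
      ∀ t : Aˣ, φ (↑t⁻¹ * c) = Ring.inverse (φ ↑t) * d ∧
        φ (c * ↑t⁻¹) = d * Ring.inverse (φ ↑t) :=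
  stmt11_general c d hd φ h
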